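/- Fix n ≥ 1 and set b = ⌊log₂ n⌋ + 2. In ℤ[X₀, …, X_{b−1}], let I be the ideal generated by Xᵢ² − (2·Xᵢ + X_{i+1}) for 0 ≤ i ≤ b−2 together with X_{b−1}². If g is a multilinear polynomial with (1 + X₀)ⁿ − g ∈ I, then the number of monomials of g whose coefficient is odd equals 2^{wt(n)}, the n-th term of Gould's sequence, where wt(n) is the number of ones in the binary expansion of n. -/

import Mathlib

/-! Send `Xᵢ ↦ X ^ 2 ^ i` into `(ZMod 2)[X]`. Modulo 2 each `Xᵢ² − 2Xᵢ − X_{i+1}` goes to `0` and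
`X_{b-1}²` to `X ^ 2 ^ b`, so the image of `(1 + X₀)ⁿ − g` is divisible by `X ^ 2 ^ b`. A multilinear
monomial `∏_{i ∈ S} Xᵢ` goes to `X ^ k` with `k = ∑_{i ∈ S} 2 ^ i < 2 ^ b`, and distinct `S` give
distinct `k` by uniqueness of binary expansions. Since `n < 2 ^ b`, the image of `g` is exactly
`(1 + X)ⁿ`, so the odd coefficients of `g` correspond to the odd `n.choose k`, which Lucas's theorem
counts as `2 ^ wt n`. -/

open MvPolynomial

/-- The generators of the ideal `I`: `Xᵢ² − (2Xᵢ + X_{i+1})` for `i ≤ b-2`, and `X_{b-1}²`. -/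
noncomputable def gens (b : ℕ) : Fin b → MvPolynomial (Fin b) ℤ := fun i =>
  if h : (i : ℕ) + 1 < b then X i ^ 2 - (2 * X i + X ⟨(i : ℕ) + 1, h⟩) else X i ^ 2

open Finset

open scoped Polynomial

theorem Nat.odd_choose_iff_mod_two_div_two (n k : ℕ) :
    Odd (n.choose k) ↔ Odd ((n % 2).choose (k % 2)) ∧ Odd ((n / 2).choose (k / 2)) := by
  have := Choose.choose_modEq_choose_mod_mul_choose_div_nat (n := n) (k := k) (p := 2)
  simp only [Nat.odd_iff, Nat.ModEq] at this ⊢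
  rw [this, Nat.mul_mod]
  rcases Nat.mod_two_eq_zero_or_one ((n % 2).choose (k % 2)) with h | h <;>
    rcases Nat.mod_two_eq_zero_or_one ((n / 2).choose (k / 2)) with h' | h' <;> simp [h, h']

theorem card_filter_range_two_mul (m : ℕ) (P Q : ℕ → Prop) [DecidablePred P] [DecidablePred Q] :
    #{k ∈ range (2 * m) | Q (k % 2) ∧ P (k / 2)} = #{r ∈ range 2 | Q r} * #{q ∈ range m | P q} := by
  rw [← card_product]
  refine card_nbij' (fun k => (k % 2, k / 2)) (fun p => p.1 + 2 * p.2) ?_ ?_ ?_ ?_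
  · intro k hk
    simp only [mem_coe, mem_filter, mem_range, mem_product] at hk ⊢
    exact ⟨⟨by omega, hk.2.1⟩, by omega, hk.2.2⟩
  · rintro ⟨r, q⟩ h
    simp only [mem_coe, mem_filter, mem_range, mem_product] at h ⊢
    have h1 : (r + 2 * q) % 2 = r := by omega
    have h2 : (r + 2 * q) / 2 = q := by omega
    exact ⟨by omega, by rw [h1, h2]; exact ⟨h.1.2, h.2.2⟩⟩
  · intro k _; simp only; omega
  · rintro ⟨r, q⟩ h
    simp only [mem_coe, mem_filter, mem_range, mem_product] at h
    simp only [Prod.mk.injEq]; omega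

theorem card_filter_odd_choose {c n : ℕ} (hn : n < 2 ^ c) :
    #{k ∈ range (2 ^ c) | Odd (n.choose k)} = 2 ^ (Nat.digits 2 n).sum := by
  induction c generalizing n with
  | zero =>
    obtain rfl : n = 0 := by omega
    decide
  | succ c ih =>
    have hlow : #{r ∈ range 2 | Odd ((n % 2).choose r)} = 2 ^ (n % 2) := by
      rcases Nat.mod_two_eq_zero_or_one n with h | h <;> rw [h] <;> decide
    simp_rw [pow_succ', Nat.odd_choose_iff_mod_two_div_two n]
    rw [card_filter_range_two_mul _ (fun q => Odd ((n / 2).choose q))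
      (fun r => Odd ((n % 2).choose r)), hlow, ih (by omega)]
    rcases n.eq_zero_or_pos with rfl | hpos
    · simp
    · rw [Nat.digits_def' one_lt_two hpos, List.sum_cons, pow_add]

theorem Polynomial.eq_of_X_pow_dvd_sub {R : Type*} [Ring R] {p q : R[X]} {N : ℕ}
    (h : Polynomial.X ^ N ∣ p - q) (hp : p.degree < N) (hq : q.degree < N) : p = q := by
  ext k
  rcases lt_or_ge k N with hk | hk
  · simpa [sub_eq_zero] using Polynomial.X_pow_dvd_iff.mp h k hk
  · rw [(Polynomial.degree_lt_iff_coeff_zero p N).mp hp k hk,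
      (Polynomial.degree_lt_iff_coeff_zero q N).mp hq k hk]

section BinaryValue

variable {b : ℕ}

def binaryValue (d : Fin b →₀ ℕ) : ℕ := ∑ i : Fin b, 2 ^ (i : ℕ) * d i

theorem binaryValue_eq_sum_support {d : Fin b →₀ ℕ} (hd : ∀ i, d i ≤ 1) :
    binaryValue d = ∑ i ∈ d.support.map Fin.valEmbedding, 2 ^ i := by
  rw [binaryValue, sum_map, ← sum_subset d.support.subset_univ fun i _ hi => by
    simp [Finsupp.notMem_support_iff.mp hi]]
  refine sum_congr rfl fun i hi => ?_
  have : d i = 1 := by have := Finsupp.mem_support_iff.mp hi; have := hd i; omega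
  simp [this]

theorem binaryValue_lt {d : Fin b →₀ ℕ} (hd : ∀ i, d i ≤ 1) : binaryValue d < 2 ^ b := by
  rw [binaryValue_eq_sum_support hd]
  exact Nat.geomSum_lt le_rfl (by simp)

theorem binaryValue_injOn : Set.InjOn (binaryValue (b := b)) {d | ∀ i, d i ≤ 1} := by
  intro d hd e he h
  rw [binaryValue_eq_sum_support hd, binaryValue_eq_sum_support he] at h
  have hsupp : d.support = e.support :=
    map_injective Fin.valEmbedding (Finset.geomSum_injective le_rfl h)
  ext i
  have hi := congrArg (i ∈ ·) hsupp
  simp only [Finsupp.mem_support_iff, eq_iff_iff] at hi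
  have := hd i; have := he i
  omega

end BinaryValue

section EvalTwoPow

variable {R S : Type*} [CommSemiring R] [CommSemiring S] {b : ℕ}

noncomputable def evalTwoPow (f : R →+* S) : MvPolynomial (Fin b) R →+* S[X] :=
  eval₂Hom (Polynomial.C.comp f) fun i => Polynomial.X ^ 2 ^ (i : ℕ)

@[simp]
theorem evalTwoPow_X (f : R →+* S) (i : Fin b) : evalTwoPow f (X i) = Polynomial.X ^ 2 ^ (i : ℕ) :=
  eval₂Hom_X' _ _ _

theorem evalTwoPow_eq_sum (f : R →+* S) (p : MvPolynomial (Fin b) R) :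
    evalTwoPow f p = ∑ d ∈ p.support, Polynomial.monomial (binaryValue d) (f (p.coeff d)) := by
  rw [evalTwoPow, coe_eval₂Hom, eval₂_eq']
  refine sum_congr rfl fun d _ => ?_
  simp_rw [← pow_mul, prod_pow_eq_pow_sum, ← Polynomial.C_mul_X_pow_eq_monomial]
  rfl

theorem support_evalTwoPow [DecidableEq S] (f : R →+* S) {p : MvPolynomial (Fin b) R}
    (hp : ∀ d ∈ p.support, ∀ i, d i ≤ 1) :
    (evalTwoPow f p).support = {d ∈ p.support | f (p.coeff d) ≠ 0}.image binaryValue := by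
  ext k
  simp only [Polynomial.mem_support_iff, evalTwoPow_eq_sum, Polynomial.finsetSum_coeff,
    Polynomial.coeff_monomial, mem_image, mem_filter]
  constructor
  · intro h
    obtain ⟨d, hd, hne⟩ := exists_ne_zero_of_sum_ne_zero h
    split_ifs at hne with hk
    · exact ⟨d, ⟨hd, hne⟩, hk⟩
    · exact absurd rfl hne
  · rintro ⟨d, ⟨hd, hne⟩, rfl⟩
    rwa [sum_eq_single_of_mem d hd fun e he hed =>
      if_neg fun h => hed (binaryValue_injOn (hp e he) (hp d hd) h), if_pos rfl]

theorem card_support_evalTwoPow [DecidableEq S] (f : R →+* S) {p : MvPolynomial (Fin b) R}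
    (hp : ∀ d ∈ p.support, ∀ i, d i ≤ 1) :
    #(evalTwoPow f p).support = #{d ∈ p.support | f (p.coeff d) ≠ 0} := by
  rw [support_evalTwoPow f hp, card_image_of_injOn fun d hd e he =>
    binaryValue_injOn (hp d (mem_filter.mp hd).1) (hp e (mem_filter.mp he).1)]

theorem degree_evalTwoPow_lt (f : R →+* S) {p : MvPolynomial (Fin b) R}
    (hp : ∀ d ∈ p.support, ∀ i, d i ≤ 1) : (evalTwoPow f p).degree < (2 ^ b : ℕ) := by
  classical
  refine (Polynomial.degree_lt_iff_coeff_zero _ _).mpr fun k hk => ?_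
  rw [← Polynomial.notMem_support_iff, support_evalTwoPow f hp]
  simp only [mem_image, mem_filter, not_exists, not_and]
  rintro d ⟨hd, -⟩ hdk
  have := binaryValue_lt (hp d hd)
  omega

end EvalTwoPow

theorem span_gens_le_comap_evalTwoPow (b : ℕ) :
    Ideal.span (Set.range (gens b)) ≤
      (Ideal.span {Polynomial.X ^ 2 ^ b}).comap (evalTwoPow (Int.castRingHom (ZMod 2))) := by
  rw [Ideal.span_le]
  rintro _ ⟨i, rfl⟩
  rw [SetLike.mem_coe, Ideal.mem_comap, gens]
  split_ifs with h
  · convert Ideal.zero_mem _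
    simp [← pow_mul, ← pow_succ, map_ofNat, CharTwo.two_eq_zero]
  · have hib : (i : ℕ) + 1 = b := by omega
    rw [map_pow, evalTwoPow_X, ← pow_mul, ← pow_succ, hib]
    exact Ideal.mem_span_singleton_self _

theorem card_support_one_add_X_pow (n : ℕ) :
    #((1 + Polynomial.X : (ZMod 2)[X]) ^ n).support = 2 ^ (Nat.digits 2 n).sum := by
  rw [← card_filter_odd_choose n.lt_two_pow_self]
  congr 1
  ext k
  simp only [Polynomial.mem_support_iff, Polynomial.coeff_one_add_X_pow, mem_filter, mem_range,
    Ne, ZMod.natCast_eq_zero_iff_even, Nat.not_even_iff_odd]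
  refine ⟨fun h => ⟨?_, h⟩, And.right⟩
  have hkn : k ≤ n := le_of_not_gt fun hk => by simp [Nat.choose_eq_zero_of_lt hk] at h
  exact hkn.trans_lt n.lt_two_pow_self

theorem stmt14 (n : ℕ) (b : ℕ) (hb : b = Nat.log 2 n + 2)
    (g : MvPolynomial (Fin b) ℤ)
    (hml : ∀ m ∈ g.support, ∀ i : Fin b, m i ≤ 1)
    (hg : (1 + X (⟨0, by omega⟩ : Fin b)) ^ n - g ∈ Ideal.span (Set.range (gens b))) :
    (g.support.filter fun m => Odd (g.coeff m)).card = 2 ^ (Nat.digits 2 n).sum := by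
  set φ := evalTwoPow (b := b) (Int.castRingHom (ZMod 2))
  have hnb : n < 2 ^ b := hb ▸
    (Nat.lt_pow_succ_log_self one_lt_two n).trans_le (Nat.pow_le_pow_right two_pos (by omega))
  have hdvd : Polynomial.X ^ 2 ^ b ∣ (1 + Polynomial.X) ^ n - φ g := by
    simpa [φ, Ideal.mem_span_singleton] using span_gens_le_comap_evalTwoPow b hg
  have hdeg : ((1 + Polynomial.X : (ZMod 2)[X]) ^ n).degree < (2 ^ b : ℕ) := by
    refine (Polynomial.degree_lt_iff_coeff_zero _ _).mpr fun k hk => ?_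
    rw [Polynomial.coeff_one_add_X_pow, Nat.choose_eq_zero_of_lt (by omega), Nat.cast_zero]
  have hφg : φ g = (1 + Polynomial.X) ^ n :=
    (Polynomial.eq_of_X_pow_dvd_sub hdvd hdeg (degree_evalTwoPow_lt _ hml)).symm
  calc #{m ∈ g.support | Odd (g.coeff m)} = #(φ g).support := by
        simp [φ, card_support_evalTwoPow _ hml, ZMod.intCast_eq_zero_iff_even]
    _ = 2 ^ (Nat.digits 2 n).sum := by rw [hφg, card_support_one_add_X_pow]
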